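/- arXiv:1612.03364 — 2 statements merged into one kernel-verified Lean document; each statement's English description precedes it below -/
import Mathlib

section
/- Let Δ, Δ′ ∈ ℝⁿ, let R′ ⊆ {1,…,n}, and let ᾱ ≥ 0 and γ̄ ≥ 0 be real constants. Suppose that |ᾱ‖Δ_{R′}‖₂² − ⟨Δ′, Δ_{R′}⟩| ≤ γ̄‖Δ_{R′}‖₂‖Δ‖₂ and |‖Δ′_{R′}‖₂² − ᾱ⟨Δ′, Δ_{R′}⟩| ≤ γ̄‖Δ′_{R′}‖₂‖Δ‖₂. Then ‖Δ′_{R′}‖₂ ≤ ᾱ‖Δ_{R′}‖₂ + γ̄‖Δ‖₂. -/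
open scoped RealInnerProductSpace
open Classical

/-- The restriction `x_S` of a vector `x ∈ ℝⁿ` to a coordinate set `S`:
it agrees with `x` on `S` and is zero elsewhere. -/
noncomputable def restr {n : ℕ} (S : Set (Fin n)) (x : EuclideanSpace ℝ (Fin n)) :
    EuclideanSpace ℝ (Fin n) := WithLp.toLp 2 (fun i => if i ∈ S then x i else 0)

/-- Lemma 4.2 (upper bound): if
`|ᾱ‖Δ_{R′}‖² − ⟨Δ′, Δ_{R′}⟩| ≤ γ̄‖Δ_{R′}‖‖Δ‖` and
`|‖Δ′_{R′}‖² − ᾱ⟨Δ′, Δ_{R′}⟩| ≤ γ̄‖Δ′_{R′}‖‖Δ‖`, then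
`‖Δ′_{R′}‖ ≤ ᾱ‖Δ_{R′}‖ + γ̄‖Δ‖`. -/
theorem graphMP_lemma_4_2_upper {n : ℕ} (Δ Δ' : EuclideanSpace ℝ (Fin n))
    (R' : Set (Fin n)) (α γ : ℝ) (hα : 0 ≤ α) (hγ : 0 ≤ γ)
    (h1 : |α * ‖restr R' Δ‖ ^ 2 - ⟪Δ', restr R' Δ⟫| ≤ γ * ‖restr R' Δ‖ * ‖Δ‖)
    (h2 : |‖restr R' Δ'‖ ^ 2 - α * ⟪Δ', restr R' Δ⟫| ≤ γ * ‖restr R' Δ'‖ * ‖Δ‖) :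
    ‖restr R' Δ'‖ ≤ α * ‖restr R' Δ‖ + γ * ‖Δ‖ := by
  set a := ‖restr R' Δ'‖ with ha
  set b := ‖restr R' Δ‖ with hb
  set c := ‖Δ‖ with hc
  set p := ⟪Δ', restr R' Δ⟫ with hp
  have ha0 : 0 ≤ a := norm_nonneg _
  have hb0 : 0 ≤ b := norm_nonneg _
  have hc0 : 0 ≤ c := norm_nonneg _
  have h1' := abs_le.mp h1
  have h2' := abs_le.mp h2
  by_contra hcon
  push_neg at hcon
  nlinarith [h1'.1, h1'.2, h2'.1, h2'.2, mul_nonneg hα hb0, mul_nonneg hγ hc0, sq_nonneg (a - α*b - γ*c)]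
end

section
/- Let f : ℝⁿ → ℝ be differentiable and convex with an M-Lipschitz continuous gradient, let 0 < m ≤ M, and let x, y ∈ ℝⁿ satisfy m‖x − y‖₂² ≤ ⟨∇f(x) − ∇f(y), x − y⟩. Then for any S ⊆ {1,…,n} with supp(x − y) ⊆ S, one has ‖x − y − (m/M²)((∇f(x))_S − (∇f(y))_S)‖₂ ≤ √(1 − (m/M)²)·‖x − y‖₂. -/
open scoped RealInnerProductSpace
open Classical

/-- The support `supp(x) = {i : x_i ≠ 0}` of a vector. -/
def supp {n : ℕ} (x : EuclideanSpace ℝ (Fin n)) : Set (Fin n) := {i | x i ≠ 0}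

lemma restr_sub {n : ℕ} (S : Set (Fin n)) (a b : EuclideanSpace ℝ (Fin n)) :
    restr S a - restr S b = restr S (a - b) := by
  ext i
  simp only [restr, PiLp.sub_apply, PiLp.toLp_apply]
  split <;> simp

lemma inner_restr {n : ℕ} (S : Set (Fin n)) (g u : EuclideanSpace ℝ (Fin n))
    (hS : supp u ⊆ S) : ⟪restr S g, u⟫ = ⟪g, u⟫ := by
  simp only [PiLp.inner_apply, RCLike.inner_apply, starRingEnd_apply, star_trivial]
  refine Finset.sum_congr rfl fun i _ => ?_
  by_cases h : i ∈ S
  · simp [restr, h]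
  · have hu : u i = 0 := by
      by_contra hne
      exact h (hS hne)
    simp [restr, h, hu]

lemma norm_restr_le {n : ℕ} (S : Set (Fin n)) (g : EuclideanSpace ℝ (Fin n)) :
    ‖restr S g‖ ≤ ‖g‖ := by
  rw [EuclideanSpace.norm_eq, EuclideanSpace.norm_eq]
  apply Real.sqrt_le_sqrt
  apply Finset.sum_le_sum
  intro i _
  by_cases h : i ∈ S
  · simp [restr, h]
  · simp [restr, h]
    positivity

/-- Lemma 5.2: for a convex differentiable `f` with `M`-Lipschitz gradient,
if `m‖x − y‖² ≤ ⟨∇f(x) − ∇f(y), x − y⟩` and `supp(x − y) ⊆ S`, then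
`‖x − y − (m/M²)(∇_S f(x) − ∇_S f(y))‖ ≤ √(1 − (m/M)²)·‖x − y‖`. -/
theorem rsc_rss_contraction {n : ℕ}
    (f : EuclideanSpace ℝ (Fin n) → ℝ) (hf : Differentiable ℝ f)
    (hconv : ConvexOn ℝ Set.univ f)
    (m M : ℝ) (hm : 0 < m) (hmM : m ≤ M)
    (hLip : LipschitzWith (Real.toNNReal M) (gradient f))
    (x y : EuclideanSpace ℝ (Fin n))
    (hmono : m * ‖x - y‖ ^ 2 ≤ ⟪gradient f x - gradient f y, x - y⟫)
    (S : Set (Fin n)) (hS : supp (x - y) ⊆ S) :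
    ‖x - y - (m / M ^ 2) • (restr S (gradient f x) - restr S (gradient f y))‖ ≤
      Real.sqrt (1 - (m / M) ^ 2) * ‖x - y‖ := by
  have hM : 0 < M := hm.trans_le hmM
  set u := x - y with hu
  set g := gradient f x - gradient f y with hg
  set c := m / M ^ 2 with hc
  have hc0 : 0 < c := by positivity
  have hrs : restr S (gradient f x) - restr S (gradient f y) = restr S g :=
    restr_sub S _ _
  have hinner : ⟪restr S g, u⟫ = ⟪g, u⟫ := inner_restr S g u hS
  have hgle : ‖g‖ ≤ M * ‖u‖ := by
    have := hLip.dist_le_mul x y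
    rwa [dist_eq_norm, dist_eq_norm, Real.coe_toNNReal M hM.le] at this
  have hgs : ‖restr S g‖ ≤ M * ‖u‖ := (norm_restr_le S g).trans hgle
  have hmono' : m * ‖u‖ ^ 2 ≤ ⟪g, u⟫ := hmono
  have hcoef : 0 ≤ 1 - (m / M) ^ 2 := by
    have h1 : (m / M) ≤ 1 := div_le_one_of_le₀ hmM hM.le
    have h0 : 0 ≤ m / M := by positivity
    nlinarith
  -- squared norm bound
  have key : ‖u - c • restr S g‖ ^ 2 ≤ (1 - (m / M) ^ 2) * ‖u‖ ^ 2 := by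
    have expand : ‖u - c • restr S g‖ ^ 2
        = ‖u‖ ^ 2 - 2 * (c * ⟪restr S g, u⟫) + c ^ 2 * ‖restr S g‖ ^ 2 := by
      rw [norm_sub_sq_real, real_inner_smul_right, norm_smul, Real.norm_eq_abs,
        abs_of_pos hc0, mul_pow, real_inner_comm]
    have hI : m * ‖u‖ ^ 2 ≤ ⟪restr S g, u⟫ := by rw [hinner]; exact hmono'
    have hN : ‖restr S g‖ ^ 2 ≤ M ^ 2 * ‖u‖ ^ 2 := by
      have := pow_le_pow_left₀ (norm_nonneg (restr S g)) hgs 2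
      calc ‖restr S g‖ ^ 2 ≤ (M * ‖u‖) ^ 2 := this
        _ = M ^ 2 * ‖u‖ ^ 2 := by ring
    have hcM : c * M ^ 2 = m := by rw [hc]; field_simp
    have hcm : c * m = (m / M) ^ 2 := by rw [hc]; field_simp
    rw [expand]
    have h2 : c ^ 2 * ‖restr S g‖ ^ 2 ≤ (m / M) ^ 2 * ‖u‖ ^ 2 := by
      calc c ^ 2 * ‖restr S g‖ ^ 2 ≤ c ^ 2 * (M ^ 2 * ‖u‖ ^ 2) := by
            apply mul_le_mul_of_nonneg_left hN (by positivity)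
        _ = (c * M ^ 2) * (c * ‖u‖ ^ 2) := by ring
        _ = m * (c * ‖u‖ ^ 2) := by rw [hcM]
        _ = (c * m) * ‖u‖ ^ 2 := by ring
        _ = (m / M) ^ 2 * ‖u‖ ^ 2 := by rw [hcm]
    have h3 : (m / M) ^ 2 * ‖u‖ ^ 2 ≤ c * ⟪restr S g, u⟫ := by
      calc (m / M) ^ 2 * ‖u‖ ^ 2 = (c * m) * ‖u‖ ^ 2 := by rw [hcm]
        _ = c * (m * ‖u‖ ^ 2) := by ring
        _ ≤ c * ⟪restr S g, u⟫ := mul_le_mul_of_nonneg_left hI hc0.le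
    linarith
  -- conclude
  have hnn : 0 ≤ ‖u - c • restr S g‖ := norm_nonneg _
  rw [hrs]
  have : ‖u - c • restr S g‖ ≤ Real.sqrt ((1 - (m / M) ^ 2) * ‖u‖ ^ 2) := by
    rw [← Real.sqrt_sq hnn]
    exact Real.sqrt_le_sqrt key
  calc ‖u - c • restr S g‖ ≤ Real.sqrt ((1 - (m / M) ^ 2) * ‖u‖ ^ 2) := this
    _ = Real.sqrt (1 - (m / M) ^ 2) * ‖u‖ := by
        rw [Real.sqrt_mul hcoef, Real.sqrt_sq (norm_nonneg _)]
end
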